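/- If H₁ and H₂ are commensurable finitely generated infinite subgroups of a finitely generated group G (i.e. H₁ ∩ H₂ has finite index in both H₁ and H₂), then dist^{H₁}_G ∼ dist^{H₂}_G. -/

import Mathlib

/-- Domination relation: `f ≼ g` iff there are positive constants `A, B, C` with
`f x ≤ g (A*x) + B*x` for all `x > C`. -/
def Dominates (f g : ℝ → ℝ) : Prop :=
  ∃ A B C : ℝ, 0 < A ∧ 0 < B ∧ 0 < C ∧ ∀ x : ℝ, C < x → f x ≤ g (A * x) + B * x

/-- `f ∼ g` iff `f ≼ g` and `g ≼ f`. -/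
def FEquiv (f g : ℝ → ℝ) : Prop := Dominates f g ∧ Dominates g f

/-- The word length of `g` with respect to the (symmetrized) alphabet `S`. -/
noncomputable def wordLength {G : Type*} [Group G] (S : Set G) (g : G) : ℕ :=
  sInf {n | ∃ w : List G, (∀ x ∈ w, x ∈ S ∨ x⁻¹ ∈ S) ∧ w.prod = g ∧ w.length = n}

/-- The lower distortion of the subset `K` of `G`:
`dist(r) = min { |k|_T : k ∈ K, |k|_S ≥ r }` (with `min ∅ = 0`). -/
noncomputable def lowerDist {G : Type*} [Group G] (S K T : Set G) (r : ℝ) : ℝ :=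
  sInf {y : ℝ | ∃ k ∈ K, r ≤ (wordLength S k : ℝ) ∧ y = (wordLength T k : ℝ)}

/-- The upper distortion of the subset `K` of `G`:
`Dist(r) = max { |k|_T : k ∈ K, |k|_S ≤ r }`. -/
noncomputable def upperDist {G : Type*} [Group G] (S K T : Set G) (r : ℝ) : ℝ :=
  sSup {y : ℝ | ∃ k ∈ K, (wordLength S k : ℝ) ≤ r ∧ y = (wordLength T k : ℝ)}

/-!
Every `k ∈ H₂` is `σ * f` with `f ∈ H₁ ⊓ H₂` and `σ` in a finite set `R` of coset
representatives. Rewriting a geodesic `T₂`-word for `k` letter by letter into the finitely many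
Schreier elements `σ⁻¹ * t * σ'` (`σ, σ' ∈ R`) gives `|f|_{T₁} ≤ M |k|_{T₂} + c`, hence
`dist^{H₁}(r) ≤ M · dist^{H₂}(r + a) + c`, where `a` bounds `|σ|_S` on `R`.

The factor `M` is absorbed by superadditivity: if every letter of `T` has `S`-length at most `λ`,
a geodesic `T`-word for an element of `S`-length at least `m (s + λ)` can be cut into `m`
consecutive pieces of `S`-length at least `s`, so `m · dist(s) ≤ dist(m (s + λ))`.
-/

section WordLength

variable {G : Type*} [Group G] {S T : Set G}

theorem coe_closure_eq_image_prod (S : Set G) :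
    (Subgroup.closure S : Set G) = List.prod '' {w | ∀ x ∈ w, x ∈ S ∨ x⁻¹ ∈ S} := by
  rw [← Subgroup.coe_toSubmonoid, Subgroup.closure_toSubmonoid, Submonoid.closure_eq_image_prod]
  rfl

theorem list_prod_mem_closure {w : List G} (hw : ∀ x ∈ w, x ∈ S ∨ x⁻¹ ∈ S) :
    w.prod ∈ Subgroup.closure S := by
  rw [← SetLike.mem_coe, coe_closure_eq_image_prod]
  exact ⟨w, hw, rfl⟩

theorem wordLength_prod_le_length {w : List G} (hw : ∀ x ∈ w, x ∈ S ∨ x⁻¹ ∈ S) :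
    wordLength S w.prod ≤ w.length :=
  Nat.sInf_le ⟨w, hw, rfl, rfl⟩

theorem exists_list_length_eq_wordLength {g : G} (hg : g ∈ Subgroup.closure S) :
    ∃ w : List G, (∀ x ∈ w, x ∈ S ∨ x⁻¹ ∈ S) ∧ w.prod = g ∧ w.length = wordLength S g := by
  rw [← SetLike.mem_coe, coe_closure_eq_image_prod] at hg
  obtain ⟨w, hw, rfl⟩ := hg
  exact Nat.sInf_mem (s := {n | ∃ v : List G, (∀ x ∈ v, x ∈ S ∨ x⁻¹ ∈ S) ∧ v.prod = w.prod ∧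
    v.length = n}) ⟨w.length, w, hw, rfl, rfl⟩

theorem wordLength_one : wordLength S (1 : G) = 0 :=
  Nat.le_zero.mp (wordLength_prod_le_length (w := []) (by simp))

-- Off the closure `wordLength` is `sInf ∅ = 0`, so subadditivity needs the memberships.
theorem wordLength_mul_le {a b : G} (ha : a ∈ Subgroup.closure S) (hb : b ∈ Subgroup.closure S) :
    wordLength S (a * b) ≤ wordLength S a + wordLength S b := by
  obtain ⟨u, hu, rfl, hu_len⟩ := exists_list_length_eq_wordLength ha
  obtain ⟨v, hv, rfl, hv_len⟩ := exists_list_length_eq_wordLength hb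
  rw [← hu_len, ← hv_len, ← List.length_append, ← List.prod_append]
  exact wordLength_prod_le_length (by simpa [or_imp, forall_and] using ⟨hu, hv⟩)

theorem finite_setOf_mem_closure_wordLength_le (hS : S.Finite) (n : ℕ) :
    {g | g ∈ Subgroup.closure S ∧ wordLength S g ≤ n}.Finite := by
  have : Finite ↥(S ∪ S⁻¹) := (hS.union hS.inv).to_subtype
  refine ((List.finite_length_le _ n).image
    fun w : List ↥(S ∪ S⁻¹) => (w.map (↑)).prod).subset ?_
  rintro g ⟨hg, hgn⟩
  obtain ⟨w, hw, rfl, hw_len⟩ := exists_list_length_eq_wordLength hg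
  exact ⟨w.attach.map fun x => ⟨x.1, hw x.1 x.2⟩, by simpa [hw_len] using hgn, by simp⟩

theorem Set.Infinite.exists_le_wordLength {K : Set G} (hK : K.Infinite) (hS : S.Finite)
    (hKS : K ⊆ Subgroup.closure S) (r : ℝ) : ∃ k ∈ K, r ≤ wordLength S k := by
  by_contra! h
  refine hK ((finite_setOf_mem_closure_wordLength_le hS ⌈r⌉₊).subset fun k hk => ⟨hKS hk, ?_⟩)
  exact_mod_cast (h k hk).le.trans (Nat.le_ceil r)

end WordLength

section LowerDist

variable {G : Type*} [Group G] {S T : Set G}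

theorem lowerDist_nonneg (S K T : Set G) (r : ℝ) : 0 ≤ lowerDist S K T r :=
  Real.sInf_nonneg <| by
    rintro y ⟨k, -, -, rfl⟩
    positivity

theorem lowerDist_le {K : Set G} {r : ℝ} {k : G} (hk : k ∈ K) (hr : r ≤ wordLength S k) :
    lowerDist S K T r ≤ wordLength T k :=
  csInf_le ⟨0, by rintro y ⟨k, -, -, rfl⟩; positivity⟩ ⟨k, hk, hr, rfl⟩

theorem lowerDist_mono {K : Set G} {r r' : ℝ} (h : r ≤ r') (hK : ∃ k ∈ K, r' ≤ wordLength S k) :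
    lowerDist S K T r ≤ lowerDist S K T r' := by
  obtain ⟨k, hk, hr'⟩ := hK
  refine csInf_le_csInf ⟨0, ?_⟩ ⟨_, k, hk, hr', rfl⟩ ?_
  · rintro y ⟨k, -, -, rfl⟩
    positivity
  · rintro y ⟨k, hk, hr, rfl⟩
    exact ⟨k, hk, h.trans hr, rfl⟩

theorem exists_lowerDist_eq {K : Set G} {r : ℝ} (hK : ∃ k ∈ K, r ≤ wordLength S k) :
    ∃ k ∈ K, r ≤ wordLength S k ∧ lowerDist S K T r = wordLength T k := by
  obtain ⟨k, hk, hr⟩ := hK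
  let P := {k | k ∈ K ∧ r ≤ (wordLength S k : ℝ)}
  obtain ⟨hk₀, hr₀⟩ : Function.argminOn (wordLength T) P ⟨k, hk, hr⟩ ∈ P :=
    Function.argminOn_mem _ _ _
  refine ⟨_, hk₀, hr₀, (lowerDist_le hk₀ hr₀).antisymm (le_csInf ⟨_, k, hk, hr, rfl⟩ ?_)⟩
  rintro y ⟨k', hk', hr', rfl⟩
  exact_mod_cast Function.argminOn_le (wordLength T) P ⟨hk', hr'⟩

end LowerDist

section Superadditivity

variable {G : Type*} [Group G] {S T : Set G}

theorem exists_le_wordLength_take_prod (hS : Subgroup.closure S = ⊤) {l : ℕ} {w : List G}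
    (hw : ∀ x ∈ w, wordLength S x ≤ l) {a : ℝ} (ha : 0 < a) (haw : a ≤ wordLength S w.prod) :
    ∃ n, a ≤ wordLength S (w.take n).prod ∧ (wordLength S (w.take n).prod : ℝ) ≤ a + l := by
  classical
  have hex : ∃ n, a ≤ wordLength S (w.take n).prod := ⟨w.length, by simpa using haw⟩
  obtain ⟨j, hj⟩ : ∃ j, Nat.find hex = j + 1 := by
    refine Nat.exists_eq_add_one.mpr (Nat.pos_of_ne_zero fun h => ?_)
    have h0 := Nat.find_spec hex
    simp only [h, List.take_zero, List.prod_nil, wordLength_one, Nat.cast_zero] at h0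
    linarith
  have hprev : ¬ a ≤ wordLength S (w.take j).prod := Nat.find_min hex (by omega)
  have hj_lt : j < w.length := by
    by_contra! h
    exact hprev (by simpa [List.take_of_length_le h] using haw)
  refine ⟨j + 1, hj ▸ Nat.find_spec hex, ?_⟩
  have hstep : wordLength S (w.take (j + 1)).prod ≤ wordLength S (w.take j).prod + l := by
    rw [List.take_add_one, List.getElem?_eq_getElem hj_lt, Option.toList_some, List.prod_append,
      List.prod_singleton]
    exact (wordLength_mul_le (by simp [hS]) (by simp [hS])).trans
      (Nat.add_le_add_left (hw _ (List.getElem_mem hj_lt)) _)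
  have hstep' : (wordLength S (w.take (j + 1)).prod : ℝ) ≤ wordLength S (w.take j).prod + l := by
    exact_mod_cast hstep
  linarith [not_le.mp hprev]

theorem lowerDist_add_le {H : Subgroup G} (hS : Subgroup.closure S = ⊤)
    (hT : Subgroup.closure T = H) {l : ℕ} (hl : ∀ t ∈ T ∪ T⁻¹, wordLength S t ≤ l) {a b : ℝ}
    (ha : 0 < a) (hb : 0 ≤ b) (hH : ∃ k ∈ (H : Set G), a + b + l ≤ wordLength S k) :
    lowerDist S H T a + lowerDist S H T b ≤ lowerDist S H T (a + b + l) := by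
  obtain ⟨k, hkH, hkS, hk⟩ := exists_lowerDist_eq (T := T) hH
  rw [← hT] at hkH
  obtain ⟨w, hw, rfl, hw_len⟩ := exists_list_length_eq_wordLength hkH
  have hl₀ : (0 : ℝ) ≤ l := l.cast_nonneg
  obtain ⟨n, hn_ge, hn_le⟩ :=
    exists_le_wordLength_take_prod hS (fun x hx => hl x (hw x hx)) ha (by linarith)
  have hsplit := wordLength_mul_le (S := S) (a := (w.take n).prod) (b := (w.drop n).prod)
    (by simp [hS]) (by simp [hS])
  rw [List.prod_take_mul_prod_drop] at hsplit
  have hdrop : b ≤ wordLength S (w.drop n).prod := by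
    have hsplit' : (wordLength S w.prod : ℝ) ≤
        wordLength S (w.take n).prod + wordLength S (w.drop n).prod := by exact_mod_cast hsplit
    linarith
  have htake_letters : ∀ x ∈ w.take n, x ∈ T ∨ x⁻¹ ∈ T := fun x hx => hw x (List.mem_of_mem_take hx)
  have hdrop_letters : ∀ x ∈ w.drop n, x ∈ T ∨ x⁻¹ ∈ T := fun x hx => hw x (List.mem_of_mem_drop hx)
  calc lowerDist S H T a + lowerDist S H T b
      ≤ wordLength T (w.take n).prod + wordLength T (w.drop n).prod :=
        add_le_add (lowerDist_le (hT ▸ list_prod_mem_closure htake_letters) hn_ge)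
          (lowerDist_le (hT ▸ list_prod_mem_closure hdrop_letters) hdrop)
    _ ≤ (w.take n).length + (w.drop n).length := by
        exact_mod_cast add_le_add (wordLength_prod_le_length htake_letters)
          (wordLength_prod_le_length hdrop_letters)
    _ = lowerDist S H T (a + b + l) := by
        rw [hk, ← hw_len, ← Nat.cast_add, ← List.length_append, List.take_append_drop]

theorem natCast_mul_lowerDist_le {H : Subgroup G} (hS : Subgroup.closure S = ⊤)
    (hT : Subgroup.closure T = H) {l : ℕ} (hl : ∀ t ∈ T ∪ T⁻¹, wordLength S t ≤ l)
    (hH : ∀ r : ℝ, ∃ k ∈ (H : Set G), r ≤ wordLength S k) {s : ℝ} (hs : 0 < s) (m : ℕ) :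
    m * lowerDist S H T s ≤ lowerDist S H T (m * (s + l)) := by
  induction m with
  | zero => simpa using lowerDist_nonneg S H T 0
  | succ m ih =>
    calc ((m + 1 : ℕ) : ℝ) * lowerDist S H T s
        = lowerDist S H T s + m * lowerDist S H T s := by push_cast; ring
      _ ≤ lowerDist S H T s + lowerDist S H T (m * (s + l)) := by gcongr
      _ ≤ lowerDist S H T (s + m * (s + l) + l) :=
          lowerDist_add_le hS hT hl hs (by positivity) (hH _)
      _ = lowerDist S H T ((m + 1 : ℕ) * (s + l)) := by push_cast; ring_nf

end Superadditivity

section FiniteIndex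

variable {G : Type*} [Group G]

theorem Subgroup.exists_finite_forall_inv_mul_mem {F H : Subgroup G} (h : F.relIndex H ≠ 0) :
    ∃ R : Set G, R.Finite ∧ ∀ g ∈ H, ∃ σ ∈ R, σ⁻¹ * g ∈ F := by
  have : F.IsFiniteRelIndex H := ⟨h⟩
  refine ⟨Set.range fun q : H ⧸ F.subgroupOf H => (q.out : G), Set.finite_range _,
    fun g hg => ⟨_, ⟨(⟨g, hg⟩ : H), rfl⟩, ?_⟩⟩
  exact Subgroup.mem_subgroupOf.mp
    (QuotientGroup.eq.mp (QuotientGroup.out_eq' ((⟨g, hg⟩ : H) : H ⧸ F.subgroupOf H)))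

theorem exists_wordLength_inv_mul_le {F : Subgroup G} {T U R : Set G} (hT : T.Finite)
    (hR : R.Finite) (hRT : ∀ g ∈ Subgroup.closure T, ∃ σ ∈ R, σ⁻¹ * g ∈ F)
    (hFU : F ≤ Subgroup.closure U) :
    ∃ M c : ℕ, ∀ g ∈ Subgroup.closure T, ∀ σ ∈ R, σ⁻¹ * g ∈ F →
      wordLength U (σ⁻¹ * g) ≤ M * wordLength T g + c := by
  let D := (fun p : G × G × G => p.1⁻¹ * p.2.1 * p.2.2) '' (R ×ˢ ((T ∪ T⁻¹) ×ˢ R))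
  obtain ⟨M, hM⟩ := (((hR.prod ((hT.union hT.inv).prod hR)).image _).image (wordLength U) :
    (wordLength U '' D).Finite).bddAbove
  obtain ⟨c, hc⟩ := (hR.image fun σ => wordLength U σ⁻¹).bddAbove
  refine ⟨M, c, ?_⟩
  suffices key : ∀ w : List G, (∀ x ∈ w, x ∈ T ∨ x⁻¹ ∈ T) → ∀ σ ∈ R, σ⁻¹ * w.prod ∈ F →
      wordLength U (σ⁻¹ * w.prod) ≤ M * w.length + c by
    intro g hg σ hσ hσg
    obtain ⟨w, hw, rfl, hw_len⟩ := exists_list_length_eq_wordLength hg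
    exact hw_len ▸ key w hw σ hσ hσg
  intro w hw
  induction w with
  | nil =>
    intro σ hσ _
    simpa using hc (Set.mem_image_of_mem _ hσ)
  | cons t v ih =>
    intro σ hσ hσw
    have hv : ∀ x ∈ v, x ∈ T ∨ x⁻¹ ∈ T := fun x hx => hw x (List.mem_cons_of_mem t hx)
    obtain ⟨σ', hσ', hσ'v⟩ := hRT _ (list_prod_mem_closure hv)
    have hsplit : σ⁻¹ * (t :: v).prod = σ⁻¹ * t * σ' * (σ'⁻¹ * v.prod) := by
      simp only [List.prod_cons]
      group
    have hd : σ⁻¹ * t * σ' ∈ F := by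
      simpa [hsplit, mul_assoc] using F.mul_mem hσw (F.inv_mem hσ'v)
    rw [hsplit]
    calc wordLength U (σ⁻¹ * t * σ' * (σ'⁻¹ * v.prod))
        ≤ wordLength U (σ⁻¹ * t * σ') + wordLength U (σ'⁻¹ * v.prod) :=
          wordLength_mul_le (hFU hd) (hFU hσ'v)
      _ ≤ M + (M * v.length + c) :=
          add_le_add (hM ⟨_, ⟨(σ, t, σ'), ⟨hσ, hw t List.mem_cons_self, hσ'⟩, rfl⟩, rfl⟩)
            (ih hv σ' hσ' hσ'v)
      _ = M * (t :: v).length + c := by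
          rw [List.length_cons]
          ring

end FiniteIndex

theorem exists_lowerDist_le_mul_lowerDist_add {G : Type*} [Group G] {H₁ H₂ : Subgroup G}
    {S T₁ T₂ : Set G} (hSgen : Subgroup.closure S = ⊤) (hT₁ : Subgroup.closure T₁ = H₁)
    (hT₂fin : T₂.Finite) (hT₂ : Subgroup.closure T₂ = H₂)
    (hH₂ : ∀ r : ℝ, ∃ k ∈ (H₂ : Set G), r ≤ wordLength S k) (hrel : H₁.relIndex H₂ ≠ 0) :
    ∃ M a c : ℕ, ∀ r : ℝ,
      lowerDist S H₁ T₁ r ≤ M * lowerDist S H₂ T₂ (r + a) + c := by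
  obtain ⟨R, hR, hRH₂⟩ := Subgroup.exists_finite_forall_inv_mul_mem hrel
  obtain ⟨M, c, hMc⟩ := exists_wordLength_inv_mul_le hT₂fin hR (hT₂ ▸ hRH₂) hT₁.ge
  obtain ⟨a, ha⟩ := (hR.image (wordLength S)).bddAbove
  refine ⟨M, a, c, fun r => ?_⟩
  obtain ⟨k, hkH₂, hkS, hk⟩ := exists_lowerDist_eq (T := T₂) (hH₂ (r + a))
  obtain ⟨σ, hσR, hσk⟩ := hRH₂ k hkH₂
  have hr_le : r ≤ wordLength S (σ⁻¹ * k) := by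
    have h := wordLength_mul_le (S := S) (a := σ) (b := σ⁻¹ * k) (by simp [hSgen])
      (by simp [hSgen])
    rw [mul_inv_cancel_left] at h
    have h' : (wordLength S k : ℝ) ≤ wordLength S σ + wordLength S (σ⁻¹ * k) := by
      exact_mod_cast h
    have hσa : (wordLength S σ : ℝ) ≤ a := by exact_mod_cast ha (Set.mem_image_of_mem _ hσR)
    linarith
  calc lowerDist S H₁ T₁ r ≤ wordLength T₁ (σ⁻¹ * k) := lowerDist_le hσk hr_le
    _ ≤ M * lowerDist S H₂ T₂ (r + a) + c := by
        rw [hk]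
        exact_mod_cast hMc k (hT₂ ▸ hkH₂) σ hσR hσk

theorem dominates_lowerDist_of_relIndex_ne_zero {G : Type*} [Group G] {H₁ H₂ : Subgroup G}
    {S T₁ T₂ : Set G} (hS : S.Finite) (hSgen : Subgroup.closure S = ⊤)
    (hT₁ : Subgroup.closure T₁ = H₁) (hT₂fin : T₂.Finite) (hT₂ : Subgroup.closure T₂ = H₂)
    (hH₂ : (H₂ : Set G).Infinite) (hrel : H₁.relIndex H₂ ≠ 0) :
    Dominates (lowerDist S H₁ T₁) (lowerDist S H₂ T₂) := by
  have hH₂S : ∀ r : ℝ, ∃ k ∈ (H₂ : Set G), r ≤ wordLength S k :=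
    hH₂.exists_le_wordLength hS (by simp [hSgen])
  obtain ⟨M, a, c, hdist⟩ :=
    exists_lowerDist_le_mul_lowerDist_add hSgen hT₁ hT₂fin hT₂ hH₂S hrel
  obtain ⟨l, hl⟩ := ((hT₂fin.union hT₂fin.inv).image (wordLength S)).bddAbove
  have ha₀ : (0 : ℝ) ≤ a := a.cast_nonneg
  have hl₀ : (0 : ℝ) ≤ l := l.cast_nonneg
  refine ⟨(M + 1) * (2 + l), c + 1, a + 1, by positivity, by positivity, by positivity,
    fun r hr => ?_⟩
  have hsuper := natCast_mul_lowerDist_le hSgen hT₂ (fun t ht => hl (Set.mem_image_of_mem _ ht))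
    hH₂S (s := r + a) (by linarith) (M + 1)
  have hdist₀ := lowerDist_nonneg S H₂ T₂ (r + a)
  calc lowerDist S H₁ T₁ r ≤ M * lowerDist S H₂ T₂ (r + a) + c := hdist r
    _ ≤ (M + 1 : ℕ) * lowerDist S H₂ T₂ (r + a) + c := by
        push_cast
        linarith
    _ ≤ lowerDist S H₂ T₂ ((M + 1 : ℕ) * (r + a + l)) + c := add_le_add_left hsuper _
    _ ≤ lowerDist S H₂ T₂ ((M + 1) * (2 + l) * r) + (c + 1) * r := by
        push_cast
        gcongr
        · refine lowerDist_mono ?_ (hH₂S _)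
          rw [mul_assoc]
          gcongr
          nlinarith
        · nlinarith

theorem lowerDist_equiv_of_commensurable_general {G : Type*} [Group G]
    (H₁ H₂ : Subgroup G) (S T₁ T₂ : Set G)
    (hSfin : S.Finite) (hSgen : Subgroup.closure S = ⊤)
    (hT₁fin : T₁.Finite) (hT₁gen : Subgroup.closure T₁ = H₁)
    (hT₂fin : T₂.Finite) (hT₂gen : Subgroup.closure T₂ = H₂)
    (hH₁inf : (H₁ : Set G).Infinite) (hH₂inf : (H₂ : Set G).Infinite)
    (hcomm₁ : (H₁ ⊓ H₂).relIndex H₁ ≠ 0) (hcomm₂ : (H₁ ⊓ H₂).relIndex H₂ ≠ 0) :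
    FEquiv (lowerDist S (H₁ : Set G) T₁) (lowerDist S (H₂ : Set G) T₂) := by
  rw [Subgroup.inf_relIndex_right] at hcomm₂
  rw [Subgroup.inf_relIndex_left] at hcomm₁
  exact ⟨dominates_lowerDist_of_relIndex_ne_zero hSfin hSgen hT₁gen hT₂fin hT₂gen hH₂inf hcomm₂,
    dominates_lowerDist_of_relIndex_ne_zero hSfin hSgen hT₂gen hT₁fin hT₁gen hH₁inf hcomm₁⟩

/-- If `H₁` and `H₂` are commensurable infinite finitely generated subgroups of a
finitely generated group `G`, then `dist^{H₁}_G ∼ dist^{H₂}_G`. -/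
theorem lowerDist_equiv_of_commensurable {G : Type*} [Group G]
    (H₁ H₂ : Subgroup G) (S T₁ T₂ : Set G)
    (hSfin : S.Finite) (hSgen : Subgroup.closure S = ⊤)
    (hT₁fin : T₁.Finite) (hT₁sub : T₁ ⊆ (H₁ : Set G)) (hT₁gen : Subgroup.closure T₁ = H₁)
    (hT₂fin : T₂.Finite) (hT₂sub : T₂ ⊆ (H₂ : Set G)) (hT₂gen : Subgroup.closure T₂ = H₂)
    (hH₁inf : (H₁ : Set G).Infinite) (hH₂inf : (H₂ : Set G).Infinite)
    (hcomm₁ : (H₁ ⊓ H₂).relIndex H₁ ≠ 0) (hcomm₂ : (H₁ ⊓ H₂).relIndex H₂ ≠ 0) :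
    FEquiv (lowerDist S (H₁ : Set G) T₁) (lowerDist S (H₂ : Set G) T₂) :=
  lowerDist_equiv_of_commensurable_general H₁ H₂ S T₁ T₂ hSfin hSgen hT₁fin hT₁gen hT₂fin hT₂gen
    hH₁inf hH₂inf hcomm₁ hcomm₂
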